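/- Let n ≥ 2 and let ν be a probability measure on S^n_+ with density g with respect to σ_+, where g : S^n_+ → (0,∞) is measurable and satisfies a ≤ g ≤ b for some constants 0 < a < b. Suppose T : S^n_+ → S^n_+ is a measurable map with T_#σ_+ = ν which minimizes ∫ d(x, S(x))² dσ_+(x) among all measurable maps S with S_#σ_+ = ν. If T is 1-Lipschitz with respect to the geodesic distance, then ν = σ_+. -/

import Mathlib

open MeasureTheory Real

noncomputable section

/-- Euclidean space `ℝ^{n+1}`. -/
abbrev Euc (n : ℕ) := EuclideanSpace ℝ (Fin (n + 1))

/-- The unit sphere `S^n ⊆ ℝ^{n+1}`. -/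
def unitSphere (n : ℕ) : Set (Euc n) := Metric.sphere 0 1

/-- The closed upper half-sphere `S^n_+`. -/
def upperHemi (n : ℕ) : Set (Euc n) := {x ∈ unitSphere n | 0 ≤ x (Fin.last n)}

/-- The equator `C = S^n_+ ∩ {x_{n+1} = 0}`. -/
def equator (n : ℕ) : Set (Euc n) := {x ∈ upperHemi n | x (Fin.last n) = 0}

/-- The geodesic distance on the sphere: `d(x,y) = arccos (x ⬝ y)`. -/
def geod {n : ℕ} (x y : Euc n) : ℝ := Real.arccos (inner ℝ x y)

/-- The north pole `N = (0,…,0,1)`. -/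
def northPole (n : ℕ) : Euc n := EuclideanSpace.single (Fin.last n) 1

/-- The uniform probability measure `σ_+` on the upper half-sphere, i.e. the normalized
restriction to `S^n_+` of the `n`-dimensional Hausdorff measure. -/
def sigmaPlus (n : ℕ) : Measure (Euc n) :=
  ((μH[n] : Measure (Euc n)) (upperHemi n))⁻¹ • (μH[n] : Measure (Euc n)).restrict (upperHemi n)

/-!
At small scales the geodesic distance on the sphere is the chordal one up to a factor
`1 + o(1)`, so a map of `S^n_+` that is `1`-Lipschitz for the geodesic distance is locally
`K`-Lipschitz for the chordal distance for every `K > 1`, and therefore does not increase the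
`n`-dimensional Hausdorff measure of subsets of `S^n_+`. Since the density of `ν` is bounded
below, `σ_+ ≪ ν = T_#σ_+`, so the compact image `T(S^n_+)` has full `σ_+`-measure and
`σ_+(B) ≤ σ_+(T(T⁻¹B ∩ S^n_+)) ≤ σ_+(T⁻¹B) = ν(B)` for every Borel set `B`. Two finite
measures of the same total mass, one below the other, are equal.
-/

open Set Filter Topology
open scoped NNReal ENNReal

section UnitVectors

variable {E : Type*} [NormedAddCommGroup E] [InnerProductSpace ℝ E] {x y : E}

theorem norm_sub_eq_two_mul_sin_arccos_inner (hx : ‖x‖ = 1) (hy : ‖y‖ = 1) :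
    ‖x - y‖ = 2 * sin (arccos (inner ℝ x y) / 2) := by
  have hinner := abs_le.1 ((abs_real_inner_le_norm x y).trans_eq (by rw [hx, hy, one_mul]))
  set θ := arccos (inner ℝ x y)
  have hsin : 0 ≤ sin (θ / 2) :=
    sin_nonneg_of_nonneg_of_le_pi (by linarith [arccos_nonneg (inner ℝ x y)])
      (by linarith [arccos_le_pi (inner ℝ x y), pi_pos])
  have hcos : cos (2 * (θ / 2)) = inner ℝ x y := by
    rw [mul_div_cancel₀ _ two_ne_zero, cos_arccos hinner.1 hinner.2]
  refine (pow_left_inj₀ (norm_nonneg _) (by positivity) two_ne_zero).1 ?_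
  rw [norm_sub_sq_real, hx, hy, ← hcos, cos_two_mul']
  linear_combination (-2) * sin_sq_add_cos_sq (θ / 2)

theorem norm_sub_le_arccos_inner (hx : ‖x‖ = 1) (hy : ‖y‖ = 1) :
    ‖x - y‖ ≤ arccos (inner ℝ x y) := by
  rw [norm_sub_eq_two_mul_sin_arccos_inner hx hy]
  linarith [sin_le (div_nonneg (arccos_nonneg (inner ℝ x y)) zero_le_two)]

theorem arccos_inner_mul_one_sub_sq_le_norm_sub (hx : ‖x‖ = 1) (hy : ‖y‖ = 1) :
    arccos (inner ℝ x y) * (1 - ‖x - y‖ ^ 2) ≤ ‖x - y‖ := by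
  have hchord := norm_sub_eq_two_mul_sin_arccos_inner hx hy
  set θ := arccos (inner ℝ x y)
  set c := ‖x - y‖
  have hθ : 0 ≤ θ := arccos_nonneg _
  have hc0 : 0 ≤ c := norm_nonneg _
  rcases le_or_gt 1 c with hc | hc
  · nlinarith [mul_nonpos_of_nonneg_of_nonpos hθ (by nlinarith : 1 - c ^ 2 ≤ 0)]
  -- concavity of `sin` on `[0, π/2]` makes `θ` comparable to the chord ...
  have hθc : θ ≤ 2 * c := by
    have := mul_le_sin (div_nonneg hθ zero_le_two) (by linarith [arccos_le_pi (inner ℝ x y)])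
    rw [hchord]
    field_simp at this ⊢
    nlinarith [pi_pos, pi_lt_four]
  rcases hθ.eq_or_lt with h0 | hθpos
  · rw [← h0, zero_mul]; exact hc0
  have hcube := sin_gt_sub_cube (half_pos hθpos)
  have hθ2 : θ ^ 2 ≤ 4 * c ^ 2 := by nlinarith
  nlinarith

end UnitVectors

section LocallyLipschitz

variable {X Y : Type*} [MetricSpace X] [TopologicalSpace.SeparableSpace X] [MeasurableSpace X]
  [BorelSpace X] [MetricSpace Y] [MeasurableSpace Y] [BorelSpace Y] {f : X → Y} {s : Set X}
  {d : ℝ}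

theorem hausdorffMeasure_image_le_mul_of_dist_le_mul (hs : MeasurableSet s) {K : ℝ≥0} {δ : ℝ}
    (hδ : 0 < δ) (hf : ∀ x ∈ s, ∀ y ∈ s, dist x y < δ → dist (f x) (f y) ≤ K * dist x y)
    (hd : 0 ≤ d) : μH[d] (f '' s) ≤ (K : ℝ≥0∞) ^ d * μH[d] s := by
  cases isEmpty_or_nonempty X
  · simp [Set.eq_empty_of_isEmpty s]
  obtain ⟨u, hu⟩ := TopologicalSpace.exists_dense_seq X
  set P : ℕ → Set X := disjointed fun i => s ∩ Metric.ball (u i) (δ / 2)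
  have hPs : (⋃ i, P i) = s := by
    rw [iUnion_disjointed, ← inter_iUnion, inter_eq_left]
    intro x _
    obtain ⟨i, hi⟩ := hu.exists_dist_lt x (half_pos hδ)
    exact mem_iUnion.2 ⟨i, Metric.mem_ball.2 hi⟩
  have hP_lip (i : ℕ) : LipschitzOnWith K f (P i) := by
    refine LipschitzOnWith.of_dist_le_mul fun x hx y hy ↦ ?_
    obtain ⟨hxs, hxu⟩ := disjointed_subset _ i hx
    obtain ⟨hys, hyu⟩ := disjointed_subset _ i hy
    refine hf x hxs y hys ((dist_triangle_right x y (u i)).trans_lt ?_)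
    linarith [Metric.mem_ball.1 hxu, Metric.mem_ball.1 hyu]
  calc μH[d] (f '' s) = μH[d] (⋃ i, f '' P i) := by rw [← image_iUnion, hPs]
    _ ≤ ∑' i, μH[d] (f '' P i) := measure_iUnion_le _
    _ ≤ ∑' i, (K : ℝ≥0∞) ^ d * μH[d] (P i) :=
      ENNReal.tsum_le_tsum fun i ↦ (hP_lip i).hausdorffMeasure_image_le hd
    _ = (K : ℝ≥0∞) ^ d * μH[d] s := by
      rw [ENNReal.tsum_mul_left, ← measure_iUnion (disjoint_disjointed _)
        (.disjointed fun i ↦ hs.inter measurableSet_ball), hPs]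

theorem hausdorffMeasure_image_le_of_forall_one_lt (hs : MeasurableSet s)
    (hf : ∀ K : ℝ≥0, 1 < K → ∃ δ > 0, ∀ x ∈ s, ∀ y ∈ s, dist x y < δ →
      dist (f x) (f y) ≤ K * dist x y)
    (hd : 0 ≤ d) : μH[d] (f '' s) ≤ μH[d] s := by
  have hlim : Tendsto (fun K : ℝ≥0 ↦ (K : ℝ≥0∞) ^ d * μH[d] s) (𝓝[>] 1) (𝓝 (μH[d] s)) := by
    have : Tendsto (fun K : ℝ≥0 ↦ (K : ℝ≥0∞) ^ d) (𝓝 1) (𝓝 1) :=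
      (ENNReal.continuous_rpow_const.comp ENNReal.continuous_coe).tendsto' 1 1 (by simp)
    simpa using
      ENNReal.Tendsto.mul_const (this.mono_left nhdsWithin_le_nhds) (.inl one_ne_zero)
  refine ge_of_tendsto hlim (eventually_nhdsWithin_of_forall fun K hK ↦ ?_)
  obtain ⟨δ, hδ, hK⟩ := hf K hK
  exact hausdorffMeasure_image_le_mul_of_dist_le_mul hs hδ hK hd

end LocallyLipschitz

theorem isCompact_upperHemi (n : ℕ) : IsCompact (upperHemi n) :=
  (isCompact_sphere 0 1).inter_right
    (isClosed_le (g := fun x : Euc n ↦ x (Fin.last n)) continuous_const (by fun_prop))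

theorem measurableSet_upperHemi (n : ℕ) : MeasurableSet (upperHemi n) :=
  (isCompact_upperHemi n).isClosed.measurableSet

theorem norm_eq_one_of_mem_upperHemi {n : ℕ} {x : Euc n} (hx : x ∈ upperHemi n) : ‖x‖ = 1 :=
  mem_sphere_zero_iff_norm.1 hx.1

theorem sigmaPlus_apply (n : ℕ) (s : Set (Euc n)) :
    sigmaPlus n s = (μH[n] (upperHemi n))⁻¹ * μH[n] (s ∩ upperHemi n) := by
  rw [sigmaPlus, Measure.smul_apply, Measure.restrict_apply' (measurableSet_upperHemi n),
    smul_eq_mul]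

instance (n : ℕ) : IsFiniteMeasure (sigmaPlus n) where
  measure_univ_lt_top := by
    rw [sigmaPlus_apply, univ_inter]
    exact (ENNReal.inv_mul_le_one _).trans_lt ENNReal.one_lt_top

theorem ae_mem_upperHemi_sigmaPlus (n : ℕ) : ∀ᵐ x ∂sigmaPlus n, x ∈ upperHemi n := by
  rw [ae_iff, ← compl_def, sigmaPlus_apply, compl_inter_self, measure_empty, mul_zero]

section GeodesicallyNonexpanding

variable {n : ℕ} {T : Euc n → Euc n}

theorem exists_dist_le_mul_dist_of_geod_le (hT_maps : MapsTo T (upperHemi n) (upperHemi n))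
    (hT_lip : ∀ x ∈ upperHemi n, ∀ y ∈ upperHemi n, geod (T x) (T y) ≤ geod x y)
    {K : ℝ≥0} (hK : 1 < K) :
    ∃ δ > 0, ∀ x ∈ upperHemi n, ∀ y ∈ upperHemi n, dist x y < δ →
      dist (T x) (T y) ≤ K * dist x y := by
  have hK0 : (0 : ℝ) < K := by positivity
  have hKinv : (K : ℝ)⁻¹ < 1 := inv_lt_one_of_one_lt₀ (by exact_mod_cast hK)
  refine ⟨√(1 - (K : ℝ)⁻¹), Real.sqrt_pos.2 (by linarith), fun x hx y hy hxy ↦ ?_⟩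
  have hxy2 : dist x y ^ 2 < 1 - (K : ℝ)⁻¹ := (Real.lt_sqrt dist_nonneg).1 hxy
  have hTxy : dist (T x) (T y) ≤ geod x y := by
    rw [dist_eq_norm]
    exact (norm_sub_le_arccos_inner (norm_eq_one_of_mem_upperHemi (hT_maps hx))
      (norm_eq_one_of_mem_upperHemi (hT_maps hy))).trans (hT_lip x hx y hy)
  have hgeod : geod x y * (1 - dist x y ^ 2) ≤ dist x y := by
    rw [dist_eq_norm]
    exact arccos_inner_mul_one_sub_sq_le_norm_sub (norm_eq_one_of_mem_upperHemi hx)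
      (norm_eq_one_of_mem_upperHemi hy)
  have : dist (T x) (T y) * (K : ℝ)⁻¹ ≤ dist x y :=
    calc dist (T x) (T y) * (K : ℝ)⁻¹ ≤ geod x y * (1 - dist x y ^ 2) :=
          mul_le_mul hTxy (by linarith) (by positivity) (dist_nonneg.trans hTxy)
      _ ≤ dist x y := hgeod
  rwa [← div_eq_mul_inv, div_le_iff₀ hK0, mul_comm] at this

theorem continuousOn_of_geod_le (hT_maps : MapsTo T (upperHemi n) (upperHemi n))
    (hT_lip : ∀ x ∈ upperHemi n, ∀ y ∈ upperHemi n, geod (T x) (T y) ≤ geod x y) :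
    ContinuousOn T (upperHemi n) := by
  obtain ⟨δ, hδ, hT⟩ := exists_dist_le_mul_dist_of_geod_le hT_maps hT_lip one_lt_two
  refine Metric.continuousOn_iff.2 fun x hx ε hε ↦
    ⟨min δ (ε / 2), by positivity, fun y hy hyx ↦ ?_⟩
  calc dist (T y) (T x) ≤ 2 * dist y x := by
        exact_mod_cast hT y hy x hx (hyx.trans_le (min_le_left _ _))
    _ < ε := by linarith [hyx.trans_le (min_le_right _ _)]

theorem sigmaPlus_image_le_of_geod_le (hT_maps : MapsTo T (upperHemi n) (upperHemi n))
    (hT_lip : ∀ x ∈ upperHemi n, ∀ y ∈ upperHemi n, geod (T x) (T y) ≤ geod x y)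
    {A : Set (Euc n)} (hA : MeasurableSet A) (hAH : A ⊆ upperHemi n) :
    sigmaPlus n (T '' A) ≤ sigmaPlus n A := by
  have hμH : μH[n] (T '' A) ≤ μH[n] A :=
    hausdorffMeasure_image_le_of_forall_one_lt hA
      (fun K hK ↦ (exists_dist_le_mul_dist_of_geod_le hT_maps hT_lip hK).imp fun δ ⟨hδ, hT⟩ ↦
        ⟨hδ, fun x hx y hy ↦ hT x (hAH hx) y (hAH hy)⟩) n.cast_nonneg
  rw [sigmaPlus_apply, sigmaPlus_apply, inter_eq_left.2 hAH]
  exact mul_le_mul_of_nonneg_left ((measure_mono inter_subset_left).trans hμH) zero_le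

theorem sigmaPlus_le_map_of_geod_le (hT_maps : MapsTo T (upperHemi n) (upperHemi n))
    (hT_lip : ∀ x ∈ upperHemi n, ∀ y ∈ upperHemi n, geod (T x) (T y) ≤ geod x y)
    (hT_meas : Measurable T)
    (hac : sigmaPlus n ≪ (sigmaPlus n).map T) : sigmaPlus n ≤ (sigmaPlus n).map T := by
  set s := T '' upperHemi n
  have hs : MeasurableSet s :=
    ((isCompact_upperHemi n).image_of_continuousOn
      (continuousOn_of_geod_le hT_maps hT_lip)).isClosed.measurableSet
  -- the image has full `T_#σ_+`-measure, hence full `σ_+`-measure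
  have hsc : sigmaPlus n sᶜ = 0 := by
    refine hac ?_
    rw [Measure.map_apply hT_meas hs.compl]
    exact measure_mono_null (fun x hx hxH ↦ hx ⟨x, hxH, rfl⟩) (ae_mem_upperHemi_sigmaPlus n)
  refine Measure.le_intro fun B hB _ ↦ ?_
  have hBs : B ∩ s ⊆ T '' (T ⁻¹' B ∩ upperHemi n) := by
    rintro _ ⟨hxB, x, hx, rfl⟩
    exact ⟨x, ⟨hxB, hx⟩, rfl⟩
  calc sigmaPlus n B = sigmaPlus n (B ∩ s) + sigmaPlus n (B \ s) :=
        (measure_inter_add_sdiff B hs).symm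
    _ = sigmaPlus n (B ∩ s) := by rw [measure_mono_null (sdiff_subset_compl _ _) hsc, add_zero]
    _ ≤ sigmaPlus n (T '' (T ⁻¹' B ∩ upperHemi n)) := measure_mono hBs
    _ ≤ sigmaPlus n (T ⁻¹' B ∩ upperHemi n) :=
      sigmaPlus_image_le_of_geod_le hT_maps hT_lip
        ((hT_meas hB).inter (measurableSet_upperHemi n)) inter_subset_right
    _ ≤ (sigmaPlus n).map T B := by
      rw [Measure.map_apply hT_meas hB]
      exact measure_mono inter_subset_left

end GeodesicallyNonexpanding

theorem stmt6_general (n : ℕ) (g : Euc n → ℝ) (hg_meas : Measurable g)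
    (a b : ℝ) (ha : 0 < a)
    (hg : ∀ x ∈ upperHemi n, a ≤ g x ∧ g x ≤ b)
    (ν : Measure (Euc n))
    (hν : ν = (sigmaPlus n).withDensity (fun x => ENNReal.ofReal (g x)))
    (T : Euc n → Euc n) (hT_meas : Measurable T)
    (hT_maps : ∀ x ∈ upperHemi n, T x ∈ upperHemi n)
    (hT_push : Measure.map T (sigmaPlus n) = ν)
    (hT_lip : ∀ x ∈ upperHemi n, ∀ y ∈ upperHemi n, geod (T x) (T y) ≤ geod x y) :
    ν = sigmaPlus n := by
  have hac : sigmaPlus n ≪ ν := by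
    rw [hν]
    refine withDensity_absolutelyContinuous' hg_meas.ennreal_ofReal.aemeasurable ?_
    filter_upwards [ae_mem_upperHemi_sigmaPlus n] with x hx
    exact ENNReal.ofReal_ne_zero_iff.2 (ha.trans_le (hg x hx).1)
  rw [← hT_push] at hac ⊢
  refine (Measure.eq_of_le_of_measure_univ_eq
    (sigmaPlus_le_map_of_geod_le hT_maps hT_lip hT_meas hac) ?_).symm
  rw [Measure.map_apply hT_meas .univ, preimage_univ]

/-- If `ν` has a measurable density `g` w.r.t. `σ_+` with `0 < a ≤ g ≤ b`,
and the quadratic-cost optimal transport map `T` from `σ_+` to `ν` is `1`-Lipschitz for the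
geodesic distance, then `ν = σ_+`. -/
theorem stmt6 (n : ℕ) (hn : 2 ≤ n) (g : Euc n → ℝ) (hg_meas : Measurable g)
    (a b : ℝ) (ha : 0 < a) (hab : a < b)
    (hg : ∀ x ∈ upperHemi n, a ≤ g x ∧ g x ≤ b)
    (ν : Measure (Euc n)) [IsProbabilityMeasure ν]
    (hν : ν = (sigmaPlus n).withDensity (fun x => ENNReal.ofReal (g x)))
    (T : Euc n → Euc n) (hT_meas : Measurable T)
    (hT_maps : ∀ x ∈ upperHemi n, T x ∈ upperHemi n)
    (hT_push : Measure.map T (sigmaPlus n) = ν)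
    (hT_opt : ∀ S : Euc n → Euc n, Measurable S → (∀ x ∈ upperHemi n, S x ∈ upperHemi n) →
      Measure.map S (sigmaPlus n) = ν →
      ∫ x, (geod x (T x)) ^ 2 ∂(sigmaPlus n) ≤ ∫ x, (geod x (S x)) ^ 2 ∂(sigmaPlus n))
    (hT_lip : ∀ x ∈ upperHemi n, ∀ y ∈ upperHemi n, geod (T x) (T y) ≤ geod x y) :
    ν = sigmaPlus n :=
  stmt6_general n g hg_meas a b ha hg ν hν T hT_meas hT_maps hT_push hT_lip

end
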